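/- Fix integers K ≥ 1 and N ≥ 1. For k,l ∈ {1,…,K} and n ∈ {1,…,N} let channel power gains g_{kln} > 0, noise powers σ_{kn}² > 0, rate weights w_k > 0, and an SINR gap Γ ≥ 1 be given, and set M = max_{k,l,n} ( w_l·g_{lkn}/σ_{ln}² ). Then for all P, P' ∈ ℝ^{K×N} with nonnegative entries, |g(P') − g(P)| ≤ K·M·Σ_{k=1}^K Σ_{n=1}^N |P'_{kn} − P_{kn}|; that is, g is Lipschitz on the nonnegative orthant with constant K·M with respect to the entrywise ℓ¹ norm. -/

import Mathlib

/-- Interference-plus-noise power `I_{kn}(P) = σ_{kn}² + Σ_{l≠k} g_{kln} P_{ln}`. -/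
noncomputable def interf (K N : ℕ) (g : Fin K → Fin K → Fin N → ℝ)
    (σ2 : Fin K → Fin N → ℝ) (P : Fin K → Fin N → ℝ) (k : Fin K) (n : Fin N) : ℝ :=
  σ2 k n + ∑ l ∈ Finset.univ.erase k, g k l n * P l n

/-- SINR `SINR_{kn}(P) = g_{kkn} P_{kn} / I_{kn}(P)`. -/
noncomputable def sinr (K N : ℕ) (g : Fin K → Fin K → Fin N → ℝ)
    (σ2 : Fin K → Fin N → ℝ) (P : Fin K → Fin N → ℝ) (k : Fin K) (n : Fin N) : ℝ :=
  g k k n * P k n / interf K N g σ2 P k n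

/-- Weighted sum rate `g(P) = Σ_k Σ_n w_k log(1 + SINR_{kn}(P)/Γ)`. -/
noncomputable def wsr (K N : ℕ) (g : Fin K → Fin K → Fin N → ℝ)
    (σ2 : Fin K → Fin N → ℝ) (w : Fin K → ℝ) (Γ : ℝ)
    (P : Fin K → Fin N → ℝ) : ℝ :=
  ∑ k, ∑ n, w k * Real.log (1 + sinr K N g σ2 P k n / Γ)

/-!
Write each summand as `w_k log(1 + c/(Γ I))` with `c = g_{kkn} P_{kn}` and `I = I_{kn}(P)`.
On the nonnegative orthant `I ≥ σ_{kn}²`, and `log` is `1/s`-Lipschitz on `[s, ∞)`; so a change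
of `c` moves the summand by at most `|Δc|/σ_{kn}²`, and a change of `I` by at most
`|Δ log I| ≤ |ΔI|/σ_{kn}²`, because `A ↦ log(1 + c/A)` varies less than `log A`. Both `|Δc|`
and `|ΔI|` are controlled by `Σ_l g_{kln} |ΔP_{ln}|`, and `w_k g_{kln}/σ_{kn}² ≤ M`; summing
over `k` and `n` gives the factor `K`.
-/

open Real Finset

lemma abs_log_sub_log_le_div {s a b : ℝ} (hs : 0 < s) (ha : s ≤ a) (hb : s ≤ b) :
    |log a - log b| ≤ |a - b| / s := by
  wlog hba : b ≤ a generalizing a b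
  · rw [abs_sub_comm, abs_sub_comm a]
    exact this hb ha (le_of_not_ge hba)
  have hb0 : 0 < b := hs.trans_le hb
  have ha0 : 0 < a := hb0.trans_le hba
  rw [abs_of_nonneg (sub_nonneg.2 (log_le_log hb0 hba)), abs_of_nonneg (sub_nonneg.2 hba),
    ← log_div ha0.ne' hb0.ne']
  calc log (a / b) ≤ a / b - 1 := log_le_sub_one_of_pos (by positivity)
    _ = (a - b) / b := by field_simp
    _ ≤ (a - b) / s := by gcongr

lemma abs_log_one_add_div_sub_le {c A A' : ℝ} (hc : 0 ≤ c) (hA : 0 < A) (hA' : 0 < A') :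
    |log (1 + c / A') - log (1 + c / A)| ≤ |log A' - log A| := by
  wlog hAA' : A ≤ A' generalizing A A'
  · rw [abs_sub_comm, abs_sub_comm (log A')]
    exact this hA' hA (le_of_not_ge hAA')
  have hdecr : log (1 + c / A') ≤ log (1 + c / A) :=
    log_le_log (by positivity) (by gcongr)
  -- `(1 + c/A) / (1 + c/A') = (A + c) A' / ((A' + c) A) ≤ A' / A`
  have hratio : (1 + c / A) / (1 + c / A') ≤ A' / A := by
    rw [div_le_div_iff₀ (by positivity) hA]
    field_simp
    nlinarith
  have hlog : log (1 + c / A) - log (1 + c / A') ≤ log A' - log A := by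
    rw [← log_div (by positivity) (by positivity), ← log_div hA'.ne' hA.ne']
    exact log_le_log (by positivity) hratio
  rw [abs_of_nonpos (by linarith), abs_of_nonneg (by linarith [log_le_log hA hAA'])]
  linarith

lemma abs_log_one_add_div_div_sub_le {Γ s c c' I I' : ℝ} (hΓ : 1 ≤ Γ) (hs : 0 < s)
    (hc : 0 ≤ c) (hc' : 0 ≤ c') (hI : s ≤ I) (hI' : s ≤ I') :
    |log (1 + c' / I' / Γ) - log (1 + c / I / Γ)| ≤ (|c' - c| + |I' - I|) / s := by
  have hΓ0 : 0 < Γ := one_pos.trans_le hΓ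
  have hI0 : 0 < I := hs.trans_le hI
  have hI0' : 0 < I' := hs.trans_le hI'
  simp only [div_div]
  have hsignal : |log (1 + c' / (I' * Γ)) - log (1 + c / (I' * Γ))| ≤ |c' - c| / s :=
    calc _ ≤ |(1 + c' / (I' * Γ)) - (1 + c / (I' * Γ))| / 1 :=
          abs_log_sub_log_le_div one_pos (le_add_of_nonneg_right (by positivity))
            (le_add_of_nonneg_right (by positivity))
      _ = |c' - c| / (I' * Γ) := by
          rw [div_one, add_sub_add_left_eq_sub, ← sub_div, abs_div, abs_of_pos (mul_pos hI0' hΓ0)]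
      _ ≤ |c' - c| / s := by gcongr; nlinarith
  have hinterf : |log (1 + c / (I' * Γ)) - log (1 + c / (I * Γ))| ≤ |I' - I| / s :=
    calc _ ≤ |log (I' * Γ) - log (I * Γ)| :=
          abs_log_one_add_div_sub_le hc (by positivity) (by positivity)
      _ = |log I' - log I| := by
          rw [log_mul hI0'.ne' hΓ0.ne', log_mul hI0.ne' hΓ0.ne', add_sub_add_right_eq_sub]
      _ ≤ |I' - I| / s := abs_log_sub_log_le_div hs hI' hI
  calc _ ≤ |log (1 + c' / (I' * Γ)) - log (1 + c / (I' * Γ))| +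
        |log (1 + c / (I' * Γ)) - log (1 + c / (I * Γ))| := abs_sub_le _ _ _
    _ ≤ |c' - c| / s + |I' - I| / s := add_le_add hsignal hinterf
    _ = (|c' - c| + |I' - I|) / s := by ring

section

variable {K N : ℕ} {g : Fin K → Fin K → Fin N → ℝ} {σ2 : Fin K → Fin N → ℝ}
  {P P' : Fin K → Fin N → ℝ}

lemma le_interf (hg : ∀ k l n, 0 ≤ g k l n) (hP : ∀ k n, 0 ≤ P k n) (k : Fin K) (n : Fin N) :
    σ2 k n ≤ interf K N g σ2 P k n :=
  le_add_of_nonneg_right (sum_nonneg fun l _ => mul_nonneg (hg k l n) (hP l n))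

lemma abs_interf_sub_interf_le (hg : ∀ k l n, 0 ≤ g k l n) (k : Fin K) (n : Fin N) :
    |interf K N g σ2 P' k n - interf K N g σ2 P k n| ≤
      ∑ l ∈ univ.erase k, g k l n * |P' l n - P l n| := by
  simp only [interf, add_sub_add_left_eq_sub, ← sum_sub_distrib, ← mul_sub]
  refine (abs_sum_le_sum_abs _ _).trans_eq (sum_congr rfl fun l _ => ?_)
  rw [abs_mul, abs_of_nonneg (hg k l n)]

lemma abs_log_one_add_sinr_div_sub_le (hg : ∀ k l n, 0 ≤ g k l n) (hσ : ∀ k n, 0 < σ2 k n)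
    {Γ : ℝ} (hΓ : 1 ≤ Γ) (hP : ∀ k n, 0 ≤ P k n) (hP' : ∀ k n, 0 ≤ P' k n)
    (k : Fin K) (n : Fin N) :
    |log (1 + sinr K N g σ2 P' k n / Γ) - log (1 + sinr K N g σ2 P k n / Γ)| ≤
      (∑ l, g k l n * |P' l n - P l n|) / σ2 k n := by
  calc _ ≤ (|g k k n * P' k n - g k k n * P k n| +
          |interf K N g σ2 P' k n - interf K N g σ2 P k n|) / σ2 k n :=
        abs_log_one_add_div_div_sub_le hΓ (hσ k n) (mul_nonneg (hg k k n) (hP k n))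
          (mul_nonneg (hg k k n) (hP' k n)) (le_interf hg hP k n) (le_interf hg hP' k n)
    _ ≤ (g k k n * |P' k n - P k n| + ∑ l ∈ univ.erase k, g k l n * |P' l n - P l n|) /
          σ2 k n := by
        rw [← mul_sub, abs_mul, abs_of_nonneg (hg k k n)]
        exact div_le_div_of_nonneg_right (add_le_add_right (abs_interf_sub_interf_le hg k n) _)
          (hσ k n).le
    _ = (∑ l, g k l n * |P' l n - P l n|) / σ2 k n := by
        rw [add_sum_erase _ (fun l => g k l n * |P' l n - P l n|) (mem_univ k)]

lemma abs_wsr_sub_wsr_le {w : Fin K → ℝ} (hw : ∀ k, 0 ≤ w k) (Γ : ℝ) :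
    |wsr K N g σ2 w Γ P' - wsr K N g σ2 w Γ P| ≤
      ∑ k, ∑ n, w k * |log (1 + sinr K N g σ2 P' k n / Γ) - log (1 + sinr K N g σ2 P k n / Γ)| := by
  simp only [wsr, ← sum_sub_distrib, ← mul_sub]
  refine (abs_sum_le_sum_abs _ _).trans (sum_le_sum fun k _ => ?_)
  refine (abs_sum_le_sum_abs _ _).trans_eq (sum_congr rfl fun n _ => ?_)
  rw [abs_mul, abs_of_nonneg (hw k)]

end

theorem wsr_lipschitz_general (K N : ℕ)
    (g : Fin K → Fin K → Fin N → ℝ) (hg : ∀ k l n, 0 < g k l n)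
    (σ2 : Fin K → Fin N → ℝ) (hσ : ∀ k n, 0 < σ2 k n)
    (w : Fin K → ℝ) (hw : ∀ k, 0 < w k) (Γ : ℝ) (hΓ : 1 ≤ Γ)
    (M : ℝ)
    (hM : IsGreatest {x : ℝ | ∃ k l : Fin K, ∃ n : Fin N, x = w l * g l k n / σ2 l n} M) :
    ∀ P P' : Fin K → Fin N → ℝ, (∀ k n, 0 ≤ P k n) → (∀ k n, 0 ≤ P' k n) →
      |wsr K N g σ2 w Γ P' - wsr K N g σ2 w Γ P| ≤
        K * M * ∑ k, ∑ n, |P' k n - P k n| := by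
  intro P P' hP hP'
  have hg' : ∀ k l n, 0 ≤ g k l n := fun k l n => (hg k l n).le
  calc |wsr K N g σ2 w Γ P' - wsr K N g σ2 w Γ P|
      ≤ ∑ k, ∑ n, w k * |log (1 + sinr K N g σ2 P' k n / Γ) -
          log (1 + sinr K N g σ2 P k n / Γ)| := abs_wsr_sub_wsr_le (fun k => (hw k).le) Γ
    _ ≤ ∑ k, ∑ n, w k * ((∑ l, g k l n * |P' l n - P l n|) / σ2 k n) := by
        gcongr with k _ n _
        · exact (hw k).le
        · exact abs_log_one_add_sinr_div_sub_le hg' hσ hΓ hP hP' k n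
    _ = ∑ k, ∑ n, ∑ l, w k * g k l n / σ2 k n * |P' l n - P l n| := by
        simp only [sum_div, mul_sum]
        refine sum_congr rfl fun k _ => sum_congr rfl fun n _ => sum_congr rfl fun l _ => ?_
        ring
    _ ≤ ∑ k : Fin K, ∑ n, ∑ l, M * |P' l n - P l n| := by
        gcongr with k _ n _ l _
        exact hM.2 ⟨l, k, n, rfl⟩
    _ = K * M * ∑ k, ∑ n, |P' k n - P k n| := by
        simp only [← mul_sum, sum_const, card_univ, Fintype.card_fin, nsmul_eq_mul]
        rw [sum_comm]
        ring

/-- the weighted sum rate is Lipschitz on the nonnegative orthant with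
constant `K·M` with respect to the entrywise ℓ¹ norm, where
`M = max_{k,l,n}(w_l g_{lkn}/σ_{ln}²)`. -/
theorem wsr_lipschitz (K N : ℕ) (hK : 1 ≤ K) (hN : 1 ≤ N)
    (g : Fin K → Fin K → Fin N → ℝ) (hg : ∀ k l n, 0 < g k l n)
    (σ2 : Fin K → Fin N → ℝ) (hσ : ∀ k n, 0 < σ2 k n)
    (w : Fin K → ℝ) (hw : ∀ k, 0 < w k) (Γ : ℝ) (hΓ : 1 ≤ Γ)
    (M : ℝ)
    (hM : IsGreatest {x : ℝ | ∃ k l : Fin K, ∃ n : Fin N, x = w l * g l k n / σ2 l n} M) :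
    ∀ P P' : Fin K → Fin N → ℝ, (∀ k n, 0 ≤ P k n) → (∀ k n, 0 ≤ P' k n) →
      |wsr K N g σ2 w Γ P' - wsr K N g σ2 w Γ P| ≤
        K * M * ∑ k, ∑ n, |P' k n - P k n| :=
  wsr_lipschitz_general K N g hg σ2 hσ w hw Γ hΓ M hM
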